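/- arXiv:1706.01318 — 2 statements merged into one kernel-verified Lean document; each statement's English description precedes it below -/
import Mathlib

section
/- For all interval-valued hesitant fuzzy elements S, T ⊆ I × I, the union of the complements equals the complement of the intersection: Sᶜ ⊔ Tᶜ = (S ⊓ T)ᶜ, i.e. Set.image2 of componentwise max applied to {(1−s₂,1−s₁) : (s₁,s₂) ∈ S} and {(1−t₂,1−t₁) : (t₁,t₂) ∈ T} equals {(1−r₂,1−r₁) : (r₁,r₂) ∈ S ⊓ T}. -/
/-- Union of two IVHFEs: componentwise max via `Set.image2`. -/
def ivhfeUnion (S T : Set (unitInterval × unitInterval)) : Set (unitInterval × unitInterval) :=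
  Set.image2 (fun s t => (max s.1 t.1, max s.2 t.2)) S T

/-- Intersection of two IVHFEs: componentwise min via `Set.image2`. -/
def ivhfeInter (S T : Set (unitInterval × unitInterval)) : Set (unitInterval × unitInterval) :=
  Set.image2 (fun s t => (min s.1 t.1, min s.2 t.2)) S T

/-- Complement of an IVHFE: `{(1 - s₂, 1 - s₁) : (s₁, s₂) ∈ S}`. -/
def ivhfeCompl (S : Set (unitInterval × unitInterval)) : Set (unitInterval × unitInterval) :=
  (fun s => (unitInterval.symm s.2, unitInterval.symm s.1)) '' S

lemma symm_min (a b : unitInterval) :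
    unitInterval.symm (min a b) = max (unitInterval.symm a) (unitInterval.symm b) := by
  rcases le_total a b with h | h <;>
    simp [min_eq_left, min_eq_right, max_eq_left, max_eq_right, h,
      unitInterval.symm_le_symm, *]

theorem ivhfe_union_compl_eq_compl_inter
    (S T : Set (unitInterval × unitInterval)) :
    ivhfeUnion (ivhfeCompl S) (ivhfeCompl T) = ivhfeCompl (ivhfeInter S T) := by
  unfold ivhfeUnion ivhfeInter ivhfeCompl
  rw [Set.image2_image_left, Set.image2_image_right, Set.image_image2]
  exact Set.image2_congr fun s _ t _ => by simp [symm_min]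
end

section
/- For interval-valued hesitant fuzzy soft sets F, G, H : A → U → Set (I × I) with a common parameter set A, union distributes over intersection in the inclusion direction that holds for the pairwise operations: for every e ∈ A and h ∈ U, (F ⊔ (G ⊓ H))(e)(h) ⊆ ((F ⊔ G) ⊓ (F ⊔ H))(e)(h) as subsets of I × I. -/
theorem ivhfss_union_distrib_inter_subset
    {U A : Type*} (F G H : A → U → Set (unitInterval × unitInterval)) :
    ∀ (e : A) (h : U),
      ivhfeUnion (F e h) (ivhfeInter (G e h) (H e h)) ⊆
        ivhfeInter (ivhfeUnion (F e h) (G e h)) (ivhfeUnion (F e h) (H e h)) := by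
  intro e h x hx
  rcases hx with ⟨f, hf, gh, hgh, rfl⟩
  rcases hgh with ⟨g, hg, k, hk, rfl⟩
  exact ⟨_, ⟨f, hf, g, hg, rfl⟩, _, ⟨f, hf, k, hk, rfl⟩, by
    simp [Prod.ext_iff, max_min_distrib_left]⟩
end
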